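/- Let f : ℝ^d → ℝ be twice differentiable, with gradient satisfying symmetric (L₀,L₁)-Lipschitz continuity and Hessian satisfying symmetric (M₀,M₁)-Lipschitz continuity with respect to an arbitrary norm ‖·‖ and its dual ‖·‖₊. Then for all x, y, the second-order Taylor remainder Z_f(x,y) := ∇f(x) − ∇f(y) − ∇²f(y)(x−y) satisfies ‖Z_f(x,y)‖₊ ≤ (1/2)(M₀ + M₁‖∇f(y)‖₊)‖x−y‖² + (1/3) M₁ (L₀ + L₁‖∇f(y)‖₊) exp(L₁‖x−y‖) ‖x−y‖³. -/

import Mathlib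

/-- The dual norm of an arbitrary norm `N` on `ℝ^d`. -/
noncomputable def dualNorm {d : ℕ} (N : EuclideanSpace ℝ (Fin d) → ℝ)
    (u : EuclideanSpace ℝ (Fin d)) : ℝ :=
  sSup ((fun v => (inner ℝ u v : ℝ)) '' {v | N v ≤ 1})

section helpers
variable {d : ℕ} {N : EuclideanSpace ℝ (Fin d) → ℝ} {m : ℝ}

lemma myN_zero (hN_smul : ∀ (c : ℝ) x, N (c • x) = |c| * N x) : N 0 = 0 := by
  have := hN_smul 0 0
  simpa using this

lemma myN_neg (hN_smul : ∀ (c : ℝ) x, N (c • x) = |c| * N x) (x : EuclideanSpace ℝ (Fin d)) :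
    N (-x) = N x := by
  have := hN_smul (-1) x
  simpa using this

lemma myN_nonneg (hN_add : ∀ x y, N (x + y) ≤ N x + N y)
    (hN_smul : ∀ (c : ℝ) x, N (c • x) = |c| * N x) (x : EuclideanSpace ℝ (Fin d)) :
    0 ≤ N x := by
  have h := hN_add x (-x)
  rw [add_neg_cancel, myN_zero hN_smul, myN_neg hN_smul] at h
  linarith

lemma myN_sub_le (hN_add : ∀ x y, N (x + y) ≤ N x + N y)
    (x y : EuclideanSpace ℝ (Fin d)) :
    N x ≤ N y + N (x - y) := by
  have h := hN_add y (x - y)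
  rwa [add_sub_cancel] at h

lemma myN_sum (hN_add : ∀ x y, N (x + y) ≤ N x + N y)
    (hN_smul : ∀ (c : ℝ) x, N (c • x) = |c| * N x)
    {ι : Type*} (s : Finset ι) (g : ι → EuclideanSpace ℝ (Fin d)) :
    N (∑ i ∈ s, g i) ≤ ∑ i ∈ s, N (g i) := by
  classical
  induction s using Finset.cons_induction with
  | empty => simp [myN_zero hN_smul]
  | cons a s ha ih =>
      rw [Finset.sum_cons, Finset.sum_cons]
      exact (hN_add _ _).trans (by linarith)

lemma myN_upper (hN_add : ∀ x y, N (x + y) ≤ N x + N y)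
    (hN_smul : ∀ (c : ℝ) x, N (c • x) = |c| * N x) :
    ∃ C : ℝ, 0 < C ∧ ∀ v, N v ≤ C * ‖v‖ := by
  classical
  set e := EuclideanSpace.basisFun (Fin d) ℝ with he
  have hsum : 0 ≤ ∑ i, N (e i) :=
    Finset.sum_nonneg fun i _ => myN_nonneg hN_add hN_smul _
  refine ⟨(∑ i, N (e i)) + 1, by linarith, ?_⟩
  intro v
  have hv : (∑ i, (v i) • (e i : EuclideanSpace ℝ (Fin d))) = v := by
    simpa [he, EuclideanSpace.basisFun_repr] using e.sum_repr v
  have h1 : N v ≤ ∑ i, N ((v i) • (e i : EuclideanSpace ℝ (Fin d))) := by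
    conv_lhs => rw [← hv]
    exact myN_sum hN_add hN_smul _ _
  have h2 : ∀ i, N ((v i) • (e i : EuclideanSpace ℝ (Fin d))) ≤ ‖v‖ * N (e i) := by
    intro i
    rw [hN_smul]
    have habs : |v i| ≤ ‖v‖ := by
      have h := abs_real_inner_le_norm (EuclideanSpace.single i (1:ℝ)) v
      rw [EuclideanSpace.inner_single_left] at h
      simpa [EuclideanSpace.norm_single] using h
    exact mul_le_mul_of_nonneg_right habs (myN_nonneg hN_add hN_smul _) |>.trans_eq (by ring)
  calc N v ≤ ∑ i, N ((v i) • (e i : EuclideanSpace ℝ (Fin d))) := h1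
    _ ≤ ∑ i, ‖v‖ * N (e i) := Finset.sum_le_sum fun i _ => h2 i
    _ = (∑ i, N (e i)) * ‖v‖ := by rw [← Finset.mul_sum]; ring
    _ ≤ ((∑ i, N (e i)) + 1) * ‖v‖ := by
        have := norm_nonneg v; nlinarith

lemma myN_continuous (hN_add : ∀ x y, N (x + y) ≤ N x + N y)
    {C : ℝ} (hC : 0 < C) (hupp : ∀ v, N v ≤ C * ‖v‖) :
    Continuous N := by
  rw [Metric.continuous_iff]
  intro b ε hε
  refine ⟨C⁻¹ * ε, by positivity, fun a ha => ?_⟩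
  rw [Real.dist_eq, abs_sub_lt_iff]
  have h1 : N a - N b ≤ N (a - b) := by linarith [myN_sub_le hN_add a b]
  have h2 : N b - N a ≤ N (b - a) := by linarith [myN_sub_le hN_add b a]
  have hd : ‖a - b‖ < C⁻¹ * ε := by rwa [dist_eq_norm] at ha
  have hd' : ‖b - a‖ < C⁻¹ * ε := by rwa [norm_sub_rev]
  have k1 : N (a - b) < ε := by
    calc N (a - b) ≤ C * ‖a - b‖ := hupp _
      _ < C * (C⁻¹ * ε) := by exact mul_lt_mul_of_pos_left hd hC
      _ = ε := by field_simp
  have k2 : N (b - a) < ε := by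
    calc N (b - a) ≤ C * ‖b - a‖ := hupp _
      _ < C * (C⁻¹ * ε) := by exact mul_lt_mul_of_pos_left hd' hC
      _ = ε := by field_simp
  constructor <;> linarith

lemma myN_lower [Nontrivial (EuclideanSpace ℝ (Fin d))]
    (hN_smul : ∀ (c : ℝ) x, N (c • x) = |c| * N x)
    (hN_pos : ∀ x, x ≠ 0 → 0 < N x) (hNcont : Continuous N) :
    ∃ m : ℝ, 0 < m ∧ ∀ v, m * ‖v‖ ≤ N v := by
  have hsph : (Metric.sphere (0 : EuclideanSpace ℝ (Fin d)) 1).Nonempty :=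
    NormedSpace.sphere_nonempty.mpr zero_le_one
  obtain ⟨v₀, hv₀mem, hv₀min⟩ :=
    (isCompact_sphere (0 : EuclideanSpace ℝ (Fin d)) 1).exists_isMinOn hsph hNcont.continuousOn
  have hv₀norm : ‖v₀‖ = 1 := mem_sphere_zero_iff_norm.mp hv₀mem
  have hv₀ne : v₀ ≠ 0 := by
    intro h; rw [h, norm_zero] at hv₀norm; norm_num at hv₀norm
  refine ⟨N v₀, hN_pos v₀ hv₀ne, ?_⟩
  intro v
  rcases eq_or_ne v 0 with rfl | hv
  · simp [myN_zero hN_smul]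
  · have hvn : 0 < ‖v‖ := norm_pos_iff.mpr hv
    have hmem : (‖v‖⁻¹ • v) ∈ Metric.sphere (0 : EuclideanSpace ℝ (Fin d)) 1 := by
      rw [mem_sphere_zero_iff_norm, norm_smul, norm_inv, norm_norm]
      field_simp
    have h : N v₀ ≤ N (‖v‖⁻¹ • v) := hv₀min hmem
    rw [hN_smul, abs_of_pos (by positivity)] at h
    have := mul_le_mul_of_nonneg_left h hvn.le
    calc N v₀ * ‖v‖ = ‖v‖ * N v₀ := mul_comm _ _
      _ ≤ ‖v‖ * (‖v‖⁻¹ * N v) := this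
      _ = N v := by field_simp

lemma bddAbove_dual (hm : 0 < m) (hlow : ∀ v, m * ‖v‖ ≤ N v) (u : EuclideanSpace ℝ (Fin d)) :
    BddAbove ((fun v => (inner ℝ u v : ℝ)) '' {v | N v ≤ 1}) := by
  refine ⟨‖u‖ * m⁻¹, ?_⟩
  rintro z ⟨v, hv, rfl⟩
  have hv' : N v ≤ 1 := hv
  have h2 : m * ‖v‖ ≤ 1 := (hlow v).trans hv'
  have h1 : ‖v‖ ≤ m⁻¹ := by
    rw [← mul_le_mul_iff_right₀ hm, mul_inv_cancel₀ (ne_of_gt hm)]; exact h2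
  calc (inner ℝ u v : ℝ) ≤ ‖u‖ * ‖v‖ := real_inner_le_norm u v
    _ ≤ ‖u‖ * m⁻¹ := mul_le_mul_of_nonneg_left h1 (norm_nonneg u)

lemma inner_le_dual (hm : 0 < m) (hlow : ∀ v, m * ‖v‖ ≤ N v)
    {u v : EuclideanSpace ℝ (Fin d)} (hv : N v ≤ 1) :
    (inner ℝ u v : ℝ) ≤ dualNorm N u :=
  le_csSup (bddAbove_dual hm hlow u) ⟨v, hv, rfl⟩

lemma dual_le (hN_smul : ∀ (c : ℝ) x, N (c • x) = |c| * N x)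
    {u : EuclideanSpace ℝ (Fin d)} {c : ℝ}
    (h : ∀ v, N v ≤ 1 → (inner ℝ u v : ℝ) ≤ c) : dualNorm N u ≤ c := by
  apply csSup_le
  · refine ⟨inner ℝ u 0, ⟨0, ?_, rfl⟩⟩
    simp [Set.mem_setOf_eq, myN_zero hN_smul]
  · rintro z ⟨v, hv, rfl⟩
    exact h v hv

lemma dualNorm_nonneg (hN_smul : ∀ (c : ℝ) x, N (c • x) = |c| * N x)
    (u : EuclideanSpace ℝ (Fin d)) : 0 ≤ dualNorm N u := by
  by_cases h : BddAbove ((fun v => (inner ℝ u v : ℝ)) '' {v | N v ≤ 1})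
  · refine le_csSup h ⟨0, ?_, by simp⟩
    simp [Set.mem_setOf_eq, myN_zero hN_smul]
  · rw [dualNorm, Real.sSup_of_not_bddAbove h]

lemma dualNorm_zero (hN_smul : ∀ (c : ℝ) x, N (c • x) = |c| * N x) :
    dualNorm N (0 : EuclideanSpace ℝ (Fin d)) = 0 := by
  have himg : (fun v => (inner ℝ (0 : EuclideanSpace ℝ (Fin d)) v : ℝ)) '' {v | N v ≤ 1} = {0} := by
    apply Set.eq_singleton_iff_nonempty_unique_mem.mpr
    constructor
    · refine ⟨inner ℝ (0 : EuclideanSpace ℝ (Fin d)) 0, ⟨0, ?_, rfl⟩⟩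
      simp [Set.mem_setOf_eq, myN_zero hN_smul]
    · rintro z ⟨v, -, rfl⟩; simp
  rw [dualNorm, himg, csSup_singleton]

lemma dual_le_norm (hN_smul : ∀ (c : ℝ) x, N (c • x) = |c| * N x)
    (hm : 0 < m) (hlow : ∀ v, m * ‖v‖ ≤ N v) (u : EuclideanSpace ℝ (Fin d)) :
    dualNorm N u ≤ m⁻¹ * ‖u‖ := by
  apply dual_le hN_smul
  intro v hv
  have h2 : m * ‖v‖ ≤ 1 := (hlow v).trans hv
  have h1 : ‖v‖ ≤ m⁻¹ := by
    rw [← mul_le_mul_iff_right₀ hm, mul_inv_cancel₀ (ne_of_gt hm)]; exact h2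
  calc (inner ℝ u v : ℝ) ≤ ‖u‖ * ‖v‖ := real_inner_le_norm u v
    _ ≤ ‖u‖ * m⁻¹ := mul_le_mul_of_nonneg_left h1 (norm_nonneg u)
    _ = m⁻¹ * ‖u‖ := mul_comm _ _

lemma dual_sub_le (hN_smul : ∀ (c : ℝ) x, N (c • x) = |c| * N x)
    (hm : 0 < m) (hlow : ∀ v, m * ‖v‖ ≤ N v) (a b : EuclideanSpace ℝ (Fin d)) :
    dualNorm N a ≤ dualNorm N b + dualNorm N (a - b) := by
  apply dual_le hN_smul
  intro v hv
  have heq : (inner ℝ a v : ℝ) = inner ℝ b v + inner ℝ (a - b) v := by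
    rw [← inner_add_left]; norm_num
  rw [heq]
  exact add_le_add (inner_le_dual hm hlow hv) (inner_le_dual hm hlow hv)

lemma norm_le_dual (hN_smul : ∀ (c : ℝ) x, N (c • x) = |c| * N x)
    (hm : 0 < m) (hlow : ∀ v, m * ‖v‖ ≤ N v)
    {C : ℝ} (hC : 0 < C) (hupp : ∀ v, N v ≤ C * ‖v‖) (u : EuclideanSpace ℝ (Fin d)) :
    ‖u‖ ≤ C * dualNorm N u := by
  rcases eq_or_ne u 0 with rfl | hu
  · rw [norm_zero, dualNorm_zero hN_smul]; norm_num
  · have hu' : 0 < ‖u‖ := norm_pos_iff.mpr hu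
    have hNu : 0 < N u := lt_of_lt_of_le (by positivity) (hlow u)
    set v := (N u)⁻¹ • u with hvdef
    have hNv : N v ≤ 1 := by
      rw [hvdef, hN_smul, abs_of_pos (by positivity), inv_mul_cancel₀ (ne_of_gt hNu)]
    have hinner : (inner ℝ u v : ℝ) = (N u)⁻¹ * ‖u‖ ^ 2 := by
      rw [hvdef, real_inner_smul_right, real_inner_self_eq_norm_sq]
    have h1 : (N u)⁻¹ * ‖u‖ ^ 2 ≤ dualNorm N u := hinner ▸ inner_le_dual hm hlow hNv
    have h2 : ‖u‖ / C ≤ (N u)⁻¹ * ‖u‖ ^ 2 := by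
      rw [div_le_iff₀ hC, ← mul_le_mul_iff_right₀ hNu]
      have h3 : N u ≤ C * ‖u‖ := hupp u
      calc N u * ‖u‖ ≤ (C * ‖u‖) * ‖u‖ := by nlinarith
        _ = N u * ((N u)⁻¹ * ‖u‖ ^ 2 * C) := by field_simp
    have h4 := h2.trans h1
    rw [div_le_iff₀ hC] at h4
    linarith

lemma dual_continuous (hN_smul : ∀ (c : ℝ) x, N (c • x) = |c| * N x)
    (hm : 0 < m) (hlow : ∀ v, m * ‖v‖ ≤ N v) :
    Continuous (dualNorm N) := by
  have hlip : ∀ a b : EuclideanSpace ℝ (Fin d),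
      dualNorm N a - dualNorm N b ≤ m⁻¹ * ‖a - b‖ := by
    intro a b
    have h1 := dual_sub_le hN_smul hm hlow a b
    have h2 := dual_le_norm hN_smul hm hlow (a - b)
    linarith
  rw [Metric.continuous_iff]
  intro b ε hε
  refine ⟨m * ε, by positivity, fun a ha => ?_⟩
  rw [Real.dist_eq, abs_sub_lt_iff]
  have h1 := hlip a b
  have h2 := hlip b a
  rw [norm_sub_rev] at h2
  have hd : ‖a - b‖ < m * ε := by rwa [dist_eq_norm] at ha
  have hineq : m⁻¹ * ‖a - b‖ < ε := by
    rw [← mul_lt_mul_iff_right₀ hm, ← mul_assoc, mul_inv_cancel₀ (ne_of_gt hm), one_mul]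
    exact hd
  constructor <;> linarith

lemma my_exp_aux (s : ℝ) : Real.exp s - 1 ≤ s * Real.exp s := by
  have h1 : 1 - s ≤ Real.exp (-s) := by linarith [Real.add_one_le_exp (-s)]
  have h2 : (1 - s) * Real.exp s ≤ Real.exp (-s) * Real.exp s :=
    mul_le_mul_of_nonneg_right h1 (Real.exp_pos s).le
  rw [← Real.exp_add, neg_add_cancel, Real.exp_zero] at h2
  nlinarith

end helpers


set_option maxHeartbeats 1000000 in
/-- If `f` is twice differentiable, its gradient is symmetrically `(L₀,L₁)`-Lipschitz and
its Hessian is symmetrically `(M₀,M₁)`-Lipschitz w.r.t. an arbitrary norm `N` and its dual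
(the Hessian-difference norm being the induced operator norm), then the second-order Taylor
remainder `Z_f(x,y) = ∇f(x) − ∇f(y) − ∇²f(y)(x−y)` satisfies
`‖Z_f(x,y)‖₊ ≤ (1/2)(M₀ + M₁‖∇f(y)‖₊)‖x−y‖² +
  (1/3) M₁ (L₀ + L₁‖∇f(y)‖₊) exp(L₁‖x−y‖) ‖x−y‖³`. -/
theorem stmt_7 {d : ℕ} (f : EuclideanSpace ℝ (Fin d) → ℝ)
    (hf : Differentiable ℝ f) (hf' : Differentiable ℝ (gradient f))
    (N : EuclideanSpace ℝ (Fin d) → ℝ)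
    (hN_add : ∀ x y, N (x + y) ≤ N x + N y)
    (hN_smul : ∀ (c : ℝ) x, N (c • x) = |c| * N x)
    (hN_pos : ∀ x, x ≠ 0 → 0 < N x)
    (L₀ L₁ M₀ M₁ : ℝ) (hL₀ : 0 ≤ L₀) (hL₁ : 0 ≤ L₁) (hM₀ : 0 ≤ M₀) (hM₁ : 0 ≤ M₁)
    (hgrad : ∀ x y,
      dualNorm N (gradient f x - gradient f y) ≤
        (L₀ + L₁ * sSup ((fun θ : ℝ => dualNorm N (gradient f (θ • x + (1 - θ) • y))) ''
          Set.Icc 0 1)) * N (x - y))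
    (hhess : ∀ x y u,
      dualNorm N ((fderiv ℝ (gradient f) x - fderiv ℝ (gradient f) y) u) ≤
        (M₀ + M₁ * sSup ((fun θ : ℝ => dualNorm N (gradient f (θ • x + (1 - θ) • y))) ''
          Set.Icc 0 1)) * N (x - y) * N u) :
    ∀ x y,
      dualNorm N (gradient f x - gradient f y - fderiv ℝ (gradient f) y (x - y)) ≤
        (1 / 2) * (M₀ + M₁ * dualNorm N (gradient f y)) * N (x - y) ^ 2 +
          (1 / 3) * M₁ * (L₀ + L₁ * dualNorm N (gradient f y)) *
            Real.exp (L₁ * N (x - y)) * N (x - y) ^ 3 := by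
  classical
  intro x y
  by_cases hxy : x = y
  · subst hxy
    have h1 : gradient f x - gradient f x - (fderiv ℝ (gradient f) x) (x - x) = 0 := by
      simp
    rw [h1, dualNorm_zero hN_smul, sub_self, myN_zero hN_smul]
    norm_num
  · -- main case
    have : Nontrivial (EuclideanSpace ℝ (Fin d)) := nontrivial_of_ne x y hxy
    obtain ⟨C, hC, hupp⟩ := myN_upper hN_add hN_smul
    have hNcont : Continuous N := myN_continuous hN_add hC hupp
    obtain ⟨m, hm, hlow⟩ := myN_lower hN_smul hN_pos hNcont
    set r := N (x - y) with hrdef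
    have hr : 0 < r := hN_pos _ (sub_ne_zero.mpr hxy)
    set γ : ℝ → EuclideanSpace ℝ (Fin d) := fun t => y + t • (x - y) with hγ
    have hγ0 : γ 0 = y := by simp [hγ]
    have hγ1 : γ 1 = x := by simp [hγ]
    have hγcomb : ∀ θ s t : ℝ, θ • γ s + (1 - θ) • γ t = γ (θ * s + (1 - θ) * t) := by
      intro θ s t; simp only [hγ]; module
    have hγsub : ∀ s t : ℝ, γ s - γ t = (s - t) • (x - y) := by
      intro s t; simp only [hγ]; module
    have hNγ : ∀ s t : ℝ, N (γ s - γ t) = |s - t| * r := by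
      intro s t; rw [hγsub, hN_smul]
    set G : ℝ → ℝ := fun t => dualNorm N (gradient f (γ t)) with hGdef
    have hγcont : Continuous γ := by fun_prop
    have hgcont : Continuous fun t => gradient f (γ t) := hf'.continuous.comp hγcont
    have hGcont : Continuous G := (dual_continuous hN_smul hm hlow).comp hgcont
    have hGnn : ∀ t, 0 ≤ G t := fun t => dualNorm_nonneg hN_smul _
    have hG0 : G 0 = dualNorm N (gradient f y) := by rw [hGdef]; simp [hγ0]
    -- specialization of hgrad along the segment
    have hgrad' : ∀ s t : ℝ,
        dualNorm N (gradient f (γ s) - gradient f (γ t)) ≤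
          (L₀ + L₁ * sSup ((fun θ : ℝ => G (θ * s + (1 - θ) * t)) '' Set.Icc 0 1)) *
            (|s - t| * r) := by
      intro s t
      have h := hgrad (γ s) (γ t)
      rw [hNγ] at h
      have himg : ((fun θ : ℝ => dualNorm N (gradient f (θ • γ s + (1 - θ) • γ t))) ''
          Set.Icc 0 1) = ((fun θ : ℝ => G (θ * s + (1 - θ) * t)) '' Set.Icc 0 1) := by
        apply Set.image_congr
        intro θ _
        rw [hγcomb, hGdef]
      rwa [himg] at h
    -- Gronwall-type bound on G
    have key1 : ∀ t ∈ Set.Icc (0:ℝ) 1,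
        G t ≤ G 0 + (L₀ + L₁ * G 0) * t * r * Real.exp (L₁ * r) := by
      have main := le_gronwallBound_of_liminf_deriv_right_le
        (f := G) (f' := fun t => (L₀ + L₁ * G t) * r) (δ := G 0) (K := L₁ * r) (ε := L₀ * r)
        (a := 0) (b := 1) hGcont.continuousOn
        (by
          intro t ht ρ hρ'
          have hρ : (L₀ + L₁ * G t) * r < ρ := hρ'
          have hL₁r : (0:ℝ) ≤ L₁ * r := by positivity
          set ε' := (ρ - (L₀ + L₁ * G t) * r) / (L₁ * r + 1) with hε'def
          have hε'pos : 0 < ε' := by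
            apply div_pos; linarith; linarith
          obtain ⟨δ, hδpos, hδ⟩ := Metric.continuousAt_iff.mp hGcont.continuousAt ε' hε'pos
          have hev : ∀ z ∈ Set.Ioo t (t + δ), (z - t)⁻¹ * (G z - G t) < ρ := by
            intro z hz
            have htz : t < z := hz.1
            have hzδ : z < t + δ := hz.2
            have hsup : sSup ((fun θ : ℝ => G (θ * z + (1 - θ) * t)) '' Set.Icc 0 1) ≤
                G t + ε' := by
              refine csSup_le ⟨G ((0:ℝ) * z + (1 - 0) * t), ⟨0, by norm_num, rfl⟩⟩ ?_
              rintro w ⟨θ, hθ, rfl⟩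
              have hθ1 := hθ.1
              have hθ2 := hθ.2
              have hs1 : t ≤ θ * z + (1 - θ) * t := by nlinarith
              have hs2 : θ * z + (1 - θ) * t ≤ z := by nlinarith
              have hdist : dist (θ * z + (1 - θ) * t) t < δ := by
                rw [Real.dist_eq, abs_of_nonneg (by linarith)]
                linarith
              have hcl := hδ hdist
              rw [Real.dist_eq, abs_sub_lt_iff] at hcl
              linarith [hcl.1]
            have hGz : G z ≤ G t + (L₀ + L₁ * (G t + ε')) * ((z - t) * r) := by
              have h1 : G z ≤ G t + dualNorm N (gradient f (γ z) - gradient f (γ t)) := by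
                have := dual_sub_le hN_smul hm hlow (gradient f (γ z)) (gradient f (γ t))
                simpa [hGdef] using this
              have h2 := hgrad' z t
              rw [abs_of_pos (by linarith)] at h2
              have h3 : (L₀ + L₁ * sSup ((fun θ : ℝ => G (θ * z + (1 - θ) * t)) ''
                  Set.Icc 0 1)) * ((z - t) * r) ≤
                  (L₀ + L₁ * (G t + ε')) * ((z - t) * r) := by
                apply mul_le_mul_of_nonneg_right _ (by nlinarith)
                nlinarith
              calc G z ≤ G t + dualNorm N (gradient f (γ z) - gradient f (γ t)) := h1
                _ ≤ G t + (L₀ + L₁ * sSup ((fun θ : ℝ => G (θ * z + (1 - θ) * t)) ''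
                    Set.Icc 0 1)) * ((z - t) * r) := by linarith [h2]
                _ ≤ G t + (L₀ + L₁ * (G t + ε')) * ((z - t) * r) := by linarith
            have hslope : (z - t)⁻¹ * (G z - G t) ≤ (L₀ + L₁ * (G t + ε')) * r := by
              rw [inv_mul_le_iff₀ (by linarith : (0:ℝ) < z - t)]
              calc G z - G t ≤ (L₀ + L₁ * (G t + ε')) * ((z - t) * r) := by linarith
                _ = (z - t) * ((L₀ + L₁ * (G t + ε')) * r) := by ring
            have hfin : (L₀ + L₁ * (G t + ε')) * r < ρ := by
              have heq : ρ = (L₀ + L₁ * G t) * r + (L₁ * r + 1) * ε' := by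
                rw [hε'def]; field_simp; ring
              nlinarith
            linarith
          have hmem : Set.Ioo t (t + δ) ∈ nhdsWithin t (Set.Ioi t) :=
            Ioo_mem_nhdsGT_of_mem ⟨le_refl t, by linarith⟩
          exact (Filter.eventually_of_mem hmem hev).frequently)
        le_rfl
        (by
          intro t ht
          apply le_of_eq
          ring)
      intro t ht
      have h := main t ht
      rw [sub_zero] at h
      refine h.trans ?_
      have ht0 := ht.1
      have ht1 := ht.2
      have hexp1 : (1:ℝ) ≤ Real.exp (L₁ * r) := Real.one_le_exp (by positivity)
      by_cases hK : L₁ * r = 0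
      · rw [gronwallBound, if_pos hK]
        have he : Real.exp (L₁ * r) = 1 := by rw [hK, Real.exp_zero]
        have heq : (L₀ + L₁ * G 0) * t * r * Real.exp (L₁ * r)
            = L₀ * r * t + (L₁ * r) * (G 0 * t) := by rw [he]; ring
        rw [heq, hK]
        linarith
      · rw [gronwallBound, if_neg hK]
        have hK' : 0 < L₁ * r := lt_of_le_of_ne (by positivity) (Ne.symm hK)
        set s := L₁ * r * t with hsdef
        have hs0 : 0 ≤ s := by positivity
        have hE12 : Real.exp s ≤ Real.exp (L₁ * r) := by
          apply Real.exp_le_exp.mpr; nlinarith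
        have hE1pos : (0:ℝ) < Real.exp s := Real.exp_pos s
        have haux := my_exp_aux s
        -- term 1
        have t1a : G 0 * (Real.exp s - 1) ≤ G 0 * (s * Real.exp s) :=
          mul_le_mul_of_nonneg_left haux (hGnn 0)
        have t1b : G 0 * s * Real.exp s ≤ G 0 * s * Real.exp (L₁ * r) :=
          mul_le_mul_of_nonneg_left hE12 (mul_nonneg (hGnn 0) hs0)
        have t1c : G 0 * s * Real.exp (L₁ * r) = G 0 * (L₁ * r) * t * Real.exp (L₁ * r) := by
          rw [hsdef]; ring
        have t1 : G 0 * Real.exp s ≤ G 0 + G 0 * (L₁ * r) * t * Real.exp (L₁ * r) := by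
          nlinarith [t1a, t1b, t1c]
        -- term 2
        have t2 : L₀ * r / (L₁ * r) * (Real.exp s - 1) ≤ L₀ * r * t * Real.exp (L₁ * r) := by
          have hnn : 0 ≤ L₀ * r / (L₁ * r) := by positivity
          have step1 : L₀ * r / (L₁ * r) * (Real.exp s - 1) ≤
              L₀ * r / (L₁ * r) * (s * Real.exp s) :=
            mul_le_mul_of_nonneg_left haux hnn
          have step2 : L₀ * r / (L₁ * r) * (s * Real.exp s) = L₀ * r * t * Real.exp s := by
            rw [hsdef, div_eq_mul_inv]
            have hKK := mul_inv_cancel₀ hK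
            linear_combination (L₀ * r * t * Real.exp (L₁ * r * t)) * hKK
          have step3 : L₀ * r * t * Real.exp s ≤ L₀ * r * t * Real.exp (L₁ * r) := by
            apply mul_le_mul_of_nonneg_left hE12 (by positivity)
          linarith
        calc G 0 * Real.exp (L₁ * r * t) + L₀ * r / (L₁ * r) * (Real.exp (L₁ * r * t) - 1)
            = G 0 * Real.exp s + L₀ * r / (L₁ * r) * (Real.exp s - 1) := by rw [hsdef]
          _ ≤ G 0 + G 0 * (L₁ * r) * t * Real.exp (L₁ * r) + L₀ * r * t * Real.exp (L₁ * r) := by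
              linarith
          _ = G 0 + (L₀ + L₁ * G 0) * t * r * Real.exp (L₁ * r) := by ring
    have hGapp : ∀ u, dualNorm N (gradient f (γ u)) = G u := fun u => rfl
    clear_value r γ G
    -- derivative of t ↦ gradient f (γ t)
    have hderiv : ∀ t : ℝ, HasDerivAt (fun t => gradient f (γ t))
        ((fderiv ℝ (gradient f) (γ t)) (x - y)) t := by
      intro t
      have h1 : HasDerivAt γ (x - y) t := by
        have h2 := ((hasDerivAt_id t).smul_const (x - y)).const_add y
        simpa [hγ] using h2
      have h3 := ((hf' (γ t)).hasFDerivAt).comp_hasDerivAt t h1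
      exact h3
    -- max of G on [0,1]
    obtain ⟨t₀, ht₀mem, ht₀max⟩ := isCompact_Icc.exists_isMaxOn
      (⟨0, by norm_num⟩ : (Set.Icc (0:ℝ) 1).Nonempty) hGcont.continuousOn
    have hKc0 : 0 ≤ G t₀ := hGnn t₀
    -- sSup bound along the segment
    have hsupKc : ∀ s t : ℝ, s ∈ Set.Icc (0:ℝ) 1 → t ∈ Set.Icc (0:ℝ) 1 →
        sSup ((fun θ : ℝ => dualNorm N (gradient f (θ • γ s + (1 - θ) • γ t))) '' Set.Icc 0 1)
          ≤ G t₀ := by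
      intro s t hs ht
      refine csSup_le ⟨_, ⟨0, by norm_num, rfl⟩⟩ ?_
      rintro w ⟨θ, hθ, rfl⟩
      simp only
      rw [hγcomb]
      have hmem : θ * s + (1 - θ) * t ∈ Set.Icc (0:ℝ) 1 := by
        constructor <;> nlinarith [hθ.1, hθ.2, hs.1, hs.2, ht.1, ht.2]
      rw [hGapp]
      exact ht₀max hmem
    -- Lipschitz bound on the Hessian along the segment
    have hHlip : ∀ s ∈ Set.Icc (0:ℝ) 1, ∀ t ∈ Set.Icc (0:ℝ) 1,
        ‖(fderiv ℝ (gradient f) (γ s)) (x - y) - (fderiv ℝ (gradient f) (γ t)) (x - y)‖ ≤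
          C * ((M₀ + M₁ * G t₀) * r * r) * |s - t| := by
      intro s hs t ht
      have heq : (fderiv ℝ (gradient f) (γ s)) (x - y) - (fderiv ℝ (gradient f) (γ t)) (x - y)
          = (fderiv ℝ (gradient f) (γ s) - fderiv ℝ (gradient f) (γ t)) (x - y) := by
        simp [ContinuousLinearMap.sub_apply]
      rw [heq]
      refine (norm_le_dual hN_smul hm hlow hC hupp _).trans ?_
      have h2 := hhess (γ s) (γ t) (x - y)
      rw [hNγ, ← hrdef] at h2
      set S := sSup ((fun θ : ℝ => dualNorm N (gradient f (θ • γ s + (1 - θ) • γ t))) ''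
        Set.Icc 0 1) with hSdef
      have h3 : S ≤ G t₀ := hsupKc s t hs ht
      have habs : (0:ℝ) ≤ |s - t| := abs_nonneg _
      have h4 : (M₀ + M₁ * S) * (|s - t| * r) * r ≤ (M₀ + M₁ * G t₀) * (|s - t| * r) * r := by
        have h5 : M₀ + M₁ * S ≤ M₀ + M₁ * G t₀ := by nlinarith
        have h6 : 0 ≤ |s - t| * r * r :=
          mul_nonneg (mul_nonneg (abs_nonneg _) hr.le) hr.le
        nlinarith [mul_le_mul_of_nonneg_right h5 h6]
      calc C * dualNorm N ((fderiv ℝ (gradient f) (γ s) - fderiv ℝ (gradient f) (γ t)) (x - y))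
          ≤ C * ((M₀ + M₁ * S) * (|s - t| * r) * r) := mul_le_mul_of_nonneg_left h2 hC.le
        _ ≤ C * ((M₀ + M₁ * G t₀) * (|s - t| * r) * r) := mul_le_mul_of_nonneg_left h4 hC.le
        _ = C * ((M₀ + M₁ * G t₀) * r * r) * |s - t| := by ring
    have hLipC0 : 0 ≤ C * ((M₀ + M₁ * G t₀) * r * r) := by
      have h12 : 0 ≤ M₀ + M₁ * G t₀ := by nlinarith
      exact mul_nonneg hC.le (mul_nonneg (mul_nonneg h12 hr.le) hr.le)
    have hHcont : ContinuousOn (fun t => (fderiv ℝ (gradient f) (γ t)) (x - y))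
        (Set.Icc (0:ℝ) 1) := by
      refine (LipschitzOnWith.of_dist_le_mul
        (K := Real.toNNReal (C * ((M₀ + M₁ * G t₀) * r * r))) ?_).continuousOn
      intro a ha b hb
      rw [dist_eq_norm, Real.dist_eq, Real.coe_toNNReal _ hLipC0]
      exact hHlip a ha b hb
    have huIcc : Set.uIcc (0:ℝ) 1 = Set.Icc (0:ℝ) 1 := Set.uIcc_of_le zero_le_one
    have hintH : IntervalIntegrable (fun t => (fderiv ℝ (gradient f) (γ t)) (x - y))
        MeasureTheory.volume 0 1 :=
      (show ContinuousOn _ (Set.uIcc (0:ℝ) 1) by rwa [huIcc]).intervalIntegrable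
    have hFTC : (∫ t in (0:ℝ)..1, (fderiv ℝ (gradient f) (γ t)) (x - y))
        = gradient f x - gradient f y := by
      have h := intervalIntegral.integral_eq_sub_of_hasDerivAt (fun t _ => hderiv t) hintH
      rw [h]
      simp only [hγ1, hγ0]
    set φ : ℝ → EuclideanSpace ℝ (Fin d) := fun t =>
      (fderiv ℝ (gradient f) (γ t)) (x - y) - (fderiv ℝ (gradient f) y) (x - y) with hφdef
    clear_value φ
    have hφcont : ContinuousOn φ (Set.Icc (0:ℝ) 1) := by
      rw [hφdef]; exact hHcont.sub continuousOn_const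
    have hφint : IntervalIntegrable φ MeasureTheory.volume 0 1 :=
      (show ContinuousOn φ (Set.uIcc (0:ℝ) 1) by rwa [huIcc]).intervalIntegrable
    have hZ : gradient f x - gradient f y - (fderiv ℝ (gradient f) y) (x - y)
        = ∫ t in (0:ℝ)..1, φ t := by
      rw [hφdef, intervalIntegral.integral_sub hintH intervalIntegrable_const, hFTC,
        intervalIntegral.integral_const]
      simp
    set ψ : ℝ → ℝ := fun t => dualNorm N (φ t) with hψdef
    clear_value ψ
    have hψcont : ContinuousOn ψ (Set.Icc (0:ℝ) 1) := by
      rw [hψdef]; exact (dual_continuous hN_smul hm hlow).comp_continuousOn hφcont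
    have hψint : IntervalIntegrable ψ MeasureTheory.volume 0 1 :=
      (show ContinuousOn ψ (Set.uIcc (0:ℝ) 1) by rwa [huIcc]).intervalIntegrable
    -- dual norm of the integral is at most the integral of dual norms
    have hkey : dualNorm N (∫ t in (0:ℝ)..1, φ t) ≤ ∫ t in (0:ℝ)..1, ψ t := by
      apply dual_le hN_smul
      intro v hv
      have h1 := (innerSL ℝ v).intervalIntegral_comp_comm hφint
      simp only [innerSL_apply_apply] at h1
      have h2 : (inner ℝ (∫ t in (0:ℝ)..1, φ t) v : ℝ)
          = ∫ t in (0:ℝ)..1, (inner ℝ v (φ t) : ℝ) := by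
        rw [real_inner_comm]
        exact h1.symm
      rw [h2]
      have hinncont : ContinuousOn (fun t => (inner ℝ v (φ t) : ℝ)) (Set.Icc (0:ℝ) 1) :=
        (innerSL ℝ v).continuous.comp_continuousOn hφcont
      apply intervalIntegral.integral_mono_on zero_le_one
        ((show ContinuousOn _ (Set.uIcc (0:ℝ) 1) by rwa [huIcc]).intervalIntegrable) hψint
      intro t ht
      rw [real_inner_comm, hψdef]
      exact inner_le_dual hm hlow hv
    -- pointwise bound on ψ
    have hψbound : ∀ t ∈ Set.Icc (0:ℝ) 1, ψ t ≤
        ((M₀ + M₁ * G 0) * r ^ 2) * t +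
          (M₁ * (L₀ + L₁ * G 0) * Real.exp (L₁ * r) * r ^ 3) * t ^ 2 := by
      intro t ht
      have hφeq : φ t = (fderiv ℝ (gradient f) (γ t) - fderiv ℝ (gradient f) y) (x - y) := by
        rw [hφdef]
        simp only [ContinuousLinearMap.sub_apply]
      have h := hhess (γ t) y (x - y)
      rw [← hrdef] at h
      have hNγt : N (γ t - y) = t * r := by
        have h5 : γ t - y = t • (x - y) := by
          have h6 := hγsub t 0; rw [hγ0] at h6; simpa using h6
        rw [h5, hN_smul, ← hrdef, abs_of_nonneg ht.1]
      rw [hNγt] at h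
      have hsup : sSup ((fun θ : ℝ => dualNorm N (gradient f (θ • γ t + (1 - θ) • y))) ''
          Set.Icc 0 1) ≤ G 0 + (L₀ + L₁ * G 0) * t * r * Real.exp (L₁ * r) := by
        refine csSup_le ⟨_, ⟨0, by norm_num, rfl⟩⟩ ?_
        rintro w ⟨θ, hθ, rfl⟩
        simp only
        have hcomb : θ • γ t + (1 - θ) • y = γ (θ * t) := by
          have h6 := hγcomb θ t 0
          rw [hγ0] at h6
          simpa using h6
        rw [hcomb]
        have hmemθ : θ * t ∈ Set.Icc (0:ℝ) 1 :=
          ⟨by nlinarith [hθ.1, ht.1], by nlinarith [hθ.1, hθ.2, ht.1, ht.2]⟩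
        rw [hGapp]
        have h7 := key1 (θ * t) hmemθ
        have h8 : (L₀ + L₁ * G 0) * (θ * t) * r * Real.exp (L₁ * r) ≤
            (L₀ + L₁ * G 0) * t * r * Real.exp (L₁ * r) := by
          have hc : 0 ≤ L₀ + L₁ * G 0 := by nlinarith [hGnn 0]
          have hθt : θ * t ≤ t := by nlinarith [hθ.1, hθ.2, ht.1]
          have hpos : 0 < Real.exp (L₁ * r) := Real.exp_pos _
          have h9 : (L₀ + L₁ * G 0) * (θ * t) ≤ (L₀ + L₁ * G 0) * t :=
            mul_le_mul_of_nonneg_left hθt hc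
          have h10 := mul_le_mul_of_nonneg_right h9 (mul_nonneg hr.le hpos.le)
          linarith [h10]
        exact h7.trans (by linarith)
      have hψt : ψ t = dualNorm N ((fderiv ℝ (gradient f) (γ t) -
          fderiv ℝ (gradient f) y) (x - y)) := by
        rw [hψdef]
        simp only
        rw [hφeq]
      rw [hψt]
      refine h.trans ?_
      set S := sSup ((fun θ : ℝ => dualNorm N (gradient f (θ • γ t + (1 - θ) • y))) ''
        Set.Icc 0 1) with hSdef
      set B := G 0 + (L₀ + L₁ * G 0) * t * r * Real.exp (L₁ * r) with hBdef
      clear_value S B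
      have htrr : 0 ≤ t * r * r := mul_nonneg (mul_nonneg ht.1 hr.le) hr.le
      have hMS : M₀ + M₁ * S ≤ M₀ + M₁ * B := by
        have h11 := mul_le_mul_of_nonneg_left hsup hM₁
        linarith
      have hstep : (M₀ + M₁ * S) * (t * r * r) ≤ (M₀ + M₁ * B) * (t * r * r) :=
        mul_le_mul_of_nonneg_right hMS htrr
      calc (M₀ + M₁ * S) * (t * r) * r = (M₀ + M₁ * S) * (t * r * r) := by ring
        _ ≤ (M₀ + M₁ * B) * (t * r * r) := hstep
        _ = ((M₀ + M₁ * G 0) * r ^ 2) * t +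
            (M₁ * (L₀ + L₁ * G 0) * Real.exp (L₁ * r) * r ^ 3) * t ^ 2 := by
            rw [hBdef]; ring
    -- integral of the bound
    have hRHSint : IntervalIntegrable (fun t => ((M₀ + M₁ * G 0) * r ^ 2) * t +
        (M₁ * (L₀ + L₁ * G 0) * Real.exp (L₁ * r) * r ^ 3) * t ^ 2)
        MeasureTheory.volume 0 1 :=
      (by fun_prop : Continuous _).intervalIntegrable 0 1
    have hmono := intervalIntegral.integral_mono_on zero_le_one hψint hRHSint hψbound
    have hval : (∫ t in (0:ℝ)..1, (((M₀ + M₁ * G 0) * r ^ 2) * t +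
        (M₁ * (L₀ + L₁ * G 0) * Real.exp (L₁ * r) * r ^ 3) * t ^ 2))
        = (1/2) * (M₀ + M₁ * G 0) * r ^ 2 +
          (1/3) * M₁ * (L₀ + L₁ * G 0) * Real.exp (L₁ * r) * r ^ 3 := by
      have i1 : IntervalIntegrable (fun t : ℝ => ((M₀ + M₁ * G 0) * r ^ 2) * t)
          MeasureTheory.volume 0 1 := (by fun_prop : Continuous _).intervalIntegrable 0 1
      have i2 : IntervalIntegrable
          (fun t : ℝ => (M₁ * (L₀ + L₁ * G 0) * Real.exp (L₁ * r) * r ^ 3) * t ^ 2)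
          MeasureTheory.volume 0 1 := (by fun_prop : Continuous _).intervalIntegrable 0 1
      rw [intervalIntegral.integral_add i1 i2, intervalIntegral.integral_const_mul,
        intervalIntegral.integral_const_mul, integral_id,
        integral_pow]
      norm_num
      ring
    rw [hZ, ← hG0]
    calc dualNorm N (∫ t in (0:ℝ)..1, φ t) ≤ ∫ t in (0:ℝ)..1, ψ t := hkey
      _ ≤ _ := hmono
      _ = _ := hval
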